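/- For every x in the interval [z_1, z_n], F_Z⁻¹(F_Z(x)) = x; that is, the approximate inverse CDF recovers every value in the range of the data from its piecewise-linear CDF level. -/
import Mathlib


/-- For every x ∈ [z 1, z n], F_Z⁻¹ (F_Z x) = x. -/
theorem empiricalCDF_left_inverse
(n : ℕ) (hn : 2 ≤ n)
    (z : ℕ → ℝ)
    (hz : ∀ i, 1 ≤ i → i < n → z i < z (i + 1))
(F : ℝ → ℝ)
    (hF0 : ∀ x : ℝ, x ≤ z 1 → F x = 0)
    (hFmid : ∀ i, 1 ≤ i → i + 1 ≤ n → ∀ x : ℝ, z i < x → x ≤ z (i + 1) →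
      F x = (1 / ((n : ℝ) - 1)) * (((i : ℝ) - 1) + (x - z i) / (z (i + 1) - z i)))
    (hF1 : ∀ x : ℝ, z n < x → F x = 1)
(Finv : ℝ → ℝ)
    (hI0 : Finv 0 = z 1)
    (hImid : ∀ α : ℝ, 0 < α → α < 1 →
      Finv α = z (⌊α * ((n : ℝ) - 1)⌋₊ + 1) +
        (z (⌊α * ((n : ℝ) - 1)⌋₊ + 2) - z (⌊α * ((n : ℝ) - 1)⌋₊ + 1)) *
          (((n : ℝ) - 1) * α - (⌊α * ((n : ℝ) - 1)⌋₊ : ℝ)))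
    (hI1 : Finv 1 = z n) :
    ∀ x ∈ Set.Icc (z 1) (z n), Finv (F x) = x := by
  intro x hx
  obtain ⟨hx1, hxn⟩ := hx
  rcases eq_or_lt_of_le hx1 with h1 | h1
  · rw [hF0 x h1.symm.le, hI0, ← h1]
  have hN : (0:ℝ) < (n:ℝ) - 1 := by
    have : (2:ℝ) ≤ (n:ℝ) := by exact_mod_cast hn
    linarith
  have key : ∀ i, 1 ≤ i → i ≤ n → x ≤ z i →
      ∃ j, 1 ≤ j ∧ j + 1 ≤ n ∧ z j < x ∧ x ≤ z (j+1) := by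
    intro i
    induction i with
    | zero => intro h; omega
    | succ j ih =>
      intro _ hle hxz
      rcases Nat.eq_zero_or_pos j with rfl | hj
      · exact absurd hxz (not_le.mpr h1)
      by_cases hzj : z j < x
      · exact ⟨j, hj, hle, hzj, hxz⟩
      · exact ih hj (by omega) (le_of_not_gt hzj)
  obtain ⟨i, hi1, hin, hzi, hzi1⟩ := key n (by omega) le_rfl hxn
  have hd : 0 < z (i+1) - z i := sub_pos.mpr (hz i hi1 (by omega))
  set t : ℝ := (x - z i) / (z (i+1) - z i) with ht
  clear_value t
  have ht0 : 0 < t := by rw [ht]; exact div_pos (by linarith) hd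
  have ht1 : t ≤ 1 := by rw [ht]; exact (div_le_one hd).mpr (by linarith)
  have hxt : x = z i + (z (i+1) - z i) * t := by
    rw [ht, mul_div_cancel₀ _ (ne_of_gt hd)]; ring
  have hF : F x = (1/((n:ℝ)-1)) * (((i:ℝ)-1) + t) := by rw [ht]; exact hFmid i hi1 hin x hzi hzi1
  obtain ⟨m, rfl⟩ : ∃ m, i = m + 1 := ⟨i - 1, by omega⟩
  have him : ((m+1:ℕ):ℝ) - 1 = (m:ℝ) := by push_cast; ring
  have hαN : F x * ((n:ℝ)-1) = (m:ℝ) + t := by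
    rw [hF, him]; field_simp
  have hiN : ((m:ℝ)+1) ≤ (n:ℝ)-1 := by
    have h2 : (m:ℕ) + 2 ≤ n := hin
    have h3 : ((m:ℝ)) + 2 ≤ (n:ℝ) := by exact_mod_cast h2
    linarith
  have hα0 : 0 < F x := by
    have hp : 0 < F x * ((n:ℝ)-1) := by rw [hαN]; positivity
    nlinarith
  rcases eq_or_lt_of_le ht1 with ht1e | ht1l
  · -- t = 1, so x = z (m+2)
    have hx_eq : x = z (m+1+1) := by rw [hxt, ht1e]; ring
    rcases eq_or_lt_of_le hin with he | hl
    · -- m + 2 = n : α = 1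
      have hα : F x = 1 := by
        have hne : ((m:ℝ) + 2 : ℝ) = (n:ℝ) := by exact_mod_cast congrArg (Nat.cast : ℕ → ℝ) he
        have h2 : F x * ((n:ℝ)-1) = 1 * ((n:ℝ)-1) := by
          rw [hαN, one_mul]; linarith
        exact mul_right_cancel₀ (ne_of_gt hN) h2
      rw [hα, hI1, hx_eq, he]
    · -- m + 2 < n
      have hmn : ((m:ℝ)) + 2 < (n:ℝ) := by exact_mod_cast hl
      have hα1 : F x < 1 := by nlinarith
      have hfl : ⌊F x * ((n:ℝ)-1)⌋₊ = m + 1 := by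
        have : F x * ((n:ℝ)-1) = ((m+1:ℕ):ℝ) := by push_cast; linarith
        rw [this, Nat.floor_natCast]
      rw [hImid _ hα0 hα1, hfl]
      have hNα : ((n:ℝ)-1) * F x = (m:ℝ) + t := by linarith [hαN, mul_comm (F x) ((n:ℝ)-1)]
      rw [hNα]
      push_cast
      linear_combination (z (m+1+2) - z (m+1+1)) * ht1e - hx_eq
  · -- t < 1
    have hα1 : F x < 1 := by nlinarith
    have hfl : ⌊F x * ((n:ℝ)-1)⌋₊ = m := by
      rw [Nat.floor_eq_iff (by positivity : (0:ℝ) ≤ F x * ((n:ℝ)-1))]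
      constructor
      · rw [hαN]; linarith
      · rw [hαN]; push_cast; linarith
    rw [hImid _ hα0 hα1, hfl]
    have hNα : ((n:ℝ)-1) * F x = (m:ℝ) + t := by linarith [hαN, mul_comm (F x) ((n:ℝ)-1)]
    rw [hNα]
    have hidx : z (m+1+1) = z (m+2) := by norm_num
    rw [hidx] at hxt
    linear_combination -hxt
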